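/- arXiv:0708.0108 — 5 statements merged into one kernel-verified Lean document; each statement's English description precedes it below -/
import Mathlib

section
/- Let V be a complex vector space, let m ≥ 1, and let ξ ∈ ℂ satisfy ξ^m = 1. Suppose S ⊆ V is a nonempty finite set of vectors that is linearly independent over ℝ (regarding V as a real vector space), and suppose the set ξ • S = {ξ · v : v ∈ S} equals S. Then ξ = 1. -/
/-! Multiplication by `ξ` permutes `S`, so the sum `σ` of the elements of `S` satisfies
`ξ • σ = σ`; for `ξ ≠ 1` this forces `σ = 0`, a nontrivial `ℝ`-linear relation among the
elements of `S`. -/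

@[to_additive]
theorem Finset.prod_comp_eq_of_image_eq {α M : Type*} [CommMonoid M] {s : Finset α}
    {f : α → α} (hf : f '' s = s) (g : α → M) : ∏ x ∈ s, g (f x) = ∏ x ∈ s, g x := by
  have hmaps : Set.MapsTo f s s := fun x hx => hf ▸ Set.mem_image_of_mem f hx
  have hsurj : Set.SurjOn f s s := hf.symm.subset
  exact Finset.prod_nbij f hmaps (Finset.injOn_of_surjOn_of_card_le f hmaps hsurj le_rfl) hsurj
    fun _ _ => rfl

theorem Finset.sum_eq_zero_of_smul_image_eq {K V : Type*} [Field K] [AddCommGroup V]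
    [Module K V] {c : K} (hc : c ≠ 1) {s : Finset V} (hs : (c • ·) '' (s : Set V) = s) :
    ∑ v ∈ s, v = 0 := by
  have hfix : c • ∑ v ∈ s, v = ∑ v ∈ s, v := by
    rw [Finset.smul_sum]
    exact Finset.sum_comp_eq_of_image_eq hs id
  have hker : (c - 1) • ∑ v ∈ s, v = 0 := by rw [sub_smul, one_smul, hfix, sub_self]
  exact (smul_eq_zero.1 hker).resolve_left (sub_ne_zero.2 hc)

theorem LinearIndependent.finset_sum_ne_zero {R V : Type*} [Ring R] [Nontrivial R]
    [AddCommGroup V] [Module R V] {s : Finset V}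
    (hs : LinearIndependent R (fun v : (s : Set V) => (v : V))) (hne : s.Nonempty) :
    ∑ v ∈ s, v ≠ 0 := by
  obtain ⟨a, ha⟩ := hne
  intro hsum
  have hrel : ∑ v : s, (1 : R) • (v : V) = 0 := by
    simp only [one_smul]
    exact (Finset.sum_coe_sort s id).trans hsum
  exact one_ne_zero (Fintype.linearIndependent_iff.1 hs (fun _ => 1) hrel ⟨a, ha⟩)

theorem paper_root_of_unity_fixing_independent_set_general
    (V : Type*) [AddCommGroup V] [Module ℂ V]
    (ξ : ℂ) (S : Finset V) (hS : S.Nonempty)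
    (hind : LinearIndependent ℝ (fun v : (S : Set V) => (v : V)))
    (hstab : (fun v : V => ξ • v) '' (S : Set V) = (S : Set V)) :
    ξ = 1 := by
  by_contra hξ
  exact hind.finset_sum_ne_zero hS (Finset.sum_eq_zero_of_smul_image_eq hξ hstab)

/-- If a finite nonempty set `S` of vectors in a complex vector space is linearly
independent over `ℝ` (restriction of scalars) and is stable under multiplication
by an `m`-th root of unity `ξ`, then `ξ = 1`.  (The key step showing that
positive-dimensional cells of the decomposition `𝔛` have trivial stabilizer
in `μ_m`.) -/
theorem paper_root_of_unity_fixing_independent_set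
    (V : Type*) [AddCommGroup V] [Module ℂ V] (m : ℕ) (hm : 1 ≤ m)
    (ξ : ℂ) (hξ : ξ ^ m = 1) (S : Finset V) (hS : S.Nonempty)
    (hind : LinearIndependent ℝ (fun v : (S : Set V) => (v : V)))
    (hstab : (fun v : V => ξ • v) '' (S : Set V) = (S : Set V)) :
    ξ = 1 :=
  paper_root_of_unity_fixing_independent_set_general V ξ S hS hind hstab
end

section
/- Let m ≥ 1, let K = ℚ(ζ_m) be the m-th cyclotomic field, let s ≥ 1, and set V = K^s, a ℚ-vector space of dimension d = s·[K:ℚ]. Let V_∞ = ∏_{v} K_v^s be the product over all archimedean places v of K of the s-th powers of the corresponding completions K_v (so V_∞ is a real vector space of dimension d), with the canonical embedding V → V_∞ given componentwise by the completion maps. For a set T of archimedean places of K let V_T = {x ∈ V_∞ : x_v = 0 for all v ∉ T}. Let W ⊆ V be a ℚ-subspace with dim_ℚ W = d − 1, and let W_∞ be the topological closure in V_∞ of the image of W (equivalently, its ℝ-linear span, a hyperplane of V_∞). Then for every nonempty set T of archimedean places: dim_ℝ(W_∞ ∩ V_T) = dim_ℝ(V_T) − 1. -/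
/-! The `ℝ`-linear extension `ℝ ⊗ K^s → ∏_v ℂ^s` of the embedding is injective, since an
integral basis goes to the lattice basis of the mixed space. Hence `W_∞` has dimension `d - 1`
in `V_∞`, of dimension `d`, and `W_∞ ∩ V_T` has codimension one in `V_T` unless `V_T ⊆ W_∞`.
That fails: a nonzero rational functional vanishing on `W` is `y ↦ ∑ Tr(a_i y_i)`, whose real
extension `x ↦ ∑_v mult v ∑_i Re(σ_v(a_i) x_{v,i})` vanishes on `W_∞`; but by weak approximation
`V_∞` contains the vector supported at one place `v ∈ T` with coordinates `σ_v(a_i⁻¹ e_i)`, where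
this functional takes the value `mult v`. -/

open NumberField

/-- The embedding of `K^s` into `V_∞ = ∏_v K_v^s` (realised inside
`∏_v ℂ^s` via the embeddings attached to the archimedean places). -/
noncomputable def paperIota (K : Type*) [Field K] [NumberField K] (s : ℕ) :
    (Fin s → K) → (InfinitePlace K → Fin s → ℂ) :=
  fun x v i => v.embedding (x i)

/-- `V_∞ = ∏_v K_v^s`, realised as the closure of the `ℝ`-span of the image of
`K^s` in `∏_v ℂ^s` (by weak approximation this closure is exactly the product
of the completions). -/
noncomputable def paperVinfty (K : Type*) [Field K] [NumberField K] (s : ℕ) :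
    Submodule ℝ (InfinitePlace K → Fin s → ℂ) :=
  (Submodule.span ℝ (Set.range (paperIota K s))).topologicalClosure

/-- The subspace of vectors supported on a set `T` of archimedean places. -/
noncomputable def paperSupportedOn (K : Type*) [Field K] [NumberField K] (s : ℕ)
    (T : Set (InfinitePlace K)) :
    Submodule ℝ (InfinitePlace K → Fin s → ℂ) where
  carrier := {x | ∀ v ∉ T, x v = 0}
  zero_mem' := fun _ _ => rfl
  add_mem' := by
    intro a b ha hb v hv
    simp only [Pi.add_apply, ha v hv, hb v hv, add_zero]
  smul_mem' := by
    intro c x hx v hv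
    simp only [Pi.smul_apply, hx v hv, smul_zero]

open Module Submodule NumberField.InfinitePlace NumberField.mixedEmbedding

theorem Submodule.finrank_inf_add_one_of_not_le {K V : Type*} [DivisionRing K] [AddCommGroup V]
    [Module K V] [FiniteDimensional K V] {A F E : Submodule K V} (hA : A ≤ E) (hF : F ≤ E)
    (hE : finrank K E ≤ finrank K A + 1) (hFA : ¬ F ≤ A) :
    finrank K ↥(A ⊓ F) + 1 = finrank K F := by
  have hsup := finrank_sup_add_finrank_inf_eq A F
  have hlt : finrank K A < finrank K ↥(A ⊔ F) := finrank_lt_finrank_of_lt (left_lt_sup.mpr hFA)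
  have hle : finrank K ↥(A ⊔ F) ≤ finrank K E := finrank_mono (sup_le hA hF)
  omega

theorem Module.finrank_fin_fun_eq_mul (F M : Type*) [Field F] [AddCommGroup M] [Module F M]
    [FiniteDimensional F M] (s : ℕ) : finrank F (Fin s → M) = s * finrank F M := by
  simp [finrank_pi_fintype]

section BaseChange

variable {F E V M : Type*} [Field F] [Field E] [Algebra F E] [AddCommGroup V] [Module F V]
  [AddCommGroup M] [Module F M] [Module E M] [IsScalarTower F E M]

theorem LinearMap.injective_liftBaseChange_of_linearIndependent {ι : Type*} (f : V →ₗ[F] M)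
    (b : Basis ι F V) (hb : LinearIndependent E (f ∘ b)) :
    Function.Injective (f.liftBaseChange E) := by
  have : (b.baseChange E).constr E (f ∘ b) = f.liftBaseChange E :=
    (b.baseChange E).constr_eq E fun i => by simp
  exact this ▸ (b.baseChange E).injective_constr_of_linearIndependent hb

theorem LinearMap.finrank_span_image_of_injective_liftBaseChange (f : V →ₗ[F] M)
    (hf : Function.Injective (f.liftBaseChange E)) (W : Submodule F V) :
    finrank E (span E (f '' W)) = finrank F W := by
  have hW : Function.Injective (W.subtype.baseChange E) :=
    Module.Flat.lTensor_preserves_injective_linearMap (M := E) W.subtype W.injective_subtype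
  have hcomp : (f ∘ₗ W.subtype).liftBaseChange E =
      f.liftBaseChange E ∘ₗ W.subtype.baseChange E := by
    ext; simp
  have hrange : LinearMap.range ((f ∘ₗ W.subtype).liftBaseChange E) = span E (f '' W) := by
    rw [LinearMap.range_liftBaseChange, LinearMap.range_comp, range_subtype, map_coe]
  rw [← hrange, LinearMap.finrank_range_of_inj (hcomp ▸ hf.comp hW), finrank_baseChange]

end BaseChange

theorem Algebra.exists_eq_sum_trace_mul {F L ι : Type*} [Field F] [Field L] [Algebra F L]
    [FiniteDimensional F L] [Algebra.IsSeparable F L] [Fintype ι] [DecidableEq ι]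
    (f : Dual F (ι → L)) : ∃ a : ι → L, ∀ y, f y = ∑ i, Algebra.trace F L (a i * y i) := by
  let e := (Algebra.traceForm F L).toDual (traceForm_nondegenerate F L)
  refine ⟨fun i => e.symm (f ∘ₗ LinearMap.single F (fun _ => L) i), fun y => ?_⟩
  conv_lhs => rw [← Finset.univ_sum_single y, map_sum]
  refine Finset.sum_congr rfl fun i _ => ?_
  rw [← Algebra.traceForm_apply,
    ← LinearMap.BilinForm.toDual_def (traceForm_nondegenerate F L), LinearEquiv.apply_symm_apply]
  rfl

theorem NumberField.InfinitePlace.ratCast_trace_eq_sum_mult_re {K : Type*} [Field K]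
    [NumberField K] (z : K) :
    ((Algebra.trace ℚ K z : ℚ) : ℝ) = ∑ v : InfinitePlace K, (mult v : ℝ) * (v.embedding z).re := by
  classical
  have hsum : ((Algebra.trace ℚ K z : ℚ) : ℂ) = ∑ φ : K →+* ℂ, φ z := by
    rw [← eq_ratCast (algebraMap ℚ ℂ), trace_eq_sum_embeddings ℂ]
    exact Fintype.sum_equiv (RingHom.equivRatAlgHom K ℂ).symm _ _ fun φ => rfl
  have hre := congrArg Complex.re hsum
  rw [Complex.ratCast_re, Complex.re_sum] at hre
  rw [hre, ← Finset.sum_fiberwise Finset.univ (fun φ : K →+* ℂ => mk φ) (fun φ => (φ z).re)]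
  refine Finset.sum_congr rfl fun v _ => ?_
  -- the two embeddings above a complex place are conjugate, so they have the same real part
  have hfiber : ∀ φ ∈ Finset.univ.filter (fun φ : K →+* ℂ => mk φ = v),
      (φ z).re = (v.embedding z).re := by
    intro φ hφ
    rw [Finset.mem_filter, ← mk_embedding v, mk_eq_iff] at hφ
    rcases hφ.2 with h | h
    · rw [h]
    · rw [← h, ComplexEmbedding.conjugate_coe_eq, Complex.conj_re]
  rw [Finset.sum_congr rfl hfiber, Finset.sum_const, card_filter_mk_eq, nsmul_eq_mul]

namespace NumberField.mixedEmbedding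

variable (K : Type*) [Field K]

noncomputable def ofPlaceFun : (InfinitePlace K → ℂ) →ₗ[ℝ] mixedSpace K where
  toFun f := (fun w => (f w.1).re, fun w => f w.1)
  map_add' _ _ := rfl
  map_smul' _ _ := by ext <;> simp

theorem ofPlaceFun_embedding (x : K) :
    ofPlaceFun K (fun v => v.embedding x) = mixedEmbedding K x := by
  ext w
  · show (w.1.embedding x).re = _
    rw [mixedEmbedding_apply_isReal, ← embedding_of_isReal_apply w.2, Complex.ofReal_re]
  · rfl

end NumberField.mixedEmbedding

section PaperIota

variable (K : Type*) [Field K] [NumberField K] (s : ℕ)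

noncomputable def paperIotaₗ : (Fin s → K) →ₗ[ℚ] (InfinitePlace K → Fin s → ℂ) where
  toFun := paperIota K s
  map_add' x y := by funext v i; simp [paperIota]
  map_smul' q x := by funext v i; simp [paperIota, Rat.smul_def]

theorem coe_paperIotaₗ : ⇑(paperIotaₗ K s) = paperIota K s := rfl

theorem linearIndependent_paperIota_single :
    LinearIndependent ℝ fun p : Σ _ : Fin s, Free.ChooseBasisIndex ℤ (𝓞 K) =>
      paperIota K s (Pi.single p.1 (integralBasis K p.2)) := by
  classical
  let π := LinearMap.pi fun i : Fin s =>
    ofPlaceFun K ∘ₗ LinearMap.pi fun v : InfinitePlace K => LinearMap.proj i ∘ₗ LinearMap.proj v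
  refine LinearIndependent.of_comp π ?_
  convert (Pi.basis fun _ : Fin s => latticeBasis K).linearIndependent using 1
  funext p
  ext1 i
  rw [Function.comp_apply, Pi.basis_apply, latticeBasis_apply]
  exact (ofPlaceFun_embedding K _).trans
    (Pi.apply_single (fun _ : Fin s => mixedEmbedding K) (fun _ => map_zero _) p.1 _ i)

theorem injective_liftBaseChange_paperIotaₗ :
    Function.Injective ((paperIotaₗ K s).liftBaseChange ℝ) :=
  (paperIotaₗ K s).injective_liftBaseChange_of_linearIndependent
    (Pi.basis fun _ : Fin s => integralBasis K)
    (by simpa [Function.comp_def, coe_paperIotaₗ] using linearIndependent_paperIota_single K s)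

theorem finrank_span_paperIota_image (W : Submodule ℚ (Fin s → K)) :
    finrank ℝ (span ℝ (paperIota K s '' W)) = finrank ℚ W :=
  (paperIotaₗ K s).finrank_span_image_of_injective_liftBaseChange
    (injective_liftBaseChange_paperIotaₗ K s) W

theorem paperVinfty_eq_span : paperVinfty K s = span ℝ (Set.range (paperIota K s)) :=
  (Submodule.closed_of_finiteDimensional _).submodule_topologicalClosure_eq

theorem finrank_paperVinfty : finrank ℝ (paperVinfty K s) = s * finrank ℚ K := by
  rw [paperVinfty_eq_span, ← Set.image_univ, ← top_coe (R := ℚ),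
    finrank_span_paperIota_image, finrank_top, finrank_fin_fun_eq_mul]

theorem single_paperIota_mem_paperVinfty [DecidableEq (InfinitePlace K)] (y : Fin s → K)
    (v₀ : InfinitePlace K) : Pi.single v₀ (paperIota K s y v₀) ∈ paperVinfty K s := by
  let Φ : (Fin s → (v : InfinitePlace K) → WithAbs v.1) → (InfinitePlace K → Fin s → ℂ) :=
    fun z v i => v.embedding (z i v).ofAbs
  have hΦ : Continuous Φ := continuous_pi fun v => continuous_pi fun i =>
    (isometry_embedding v).continuous.comp ((continuous_apply v).comp (continuous_apply i))
  have hdense : DenseRange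
      (Pi.map fun _ : Fin s => algebraMap K ((v : InfinitePlace K) → WithAbs v.1)) :=
    DenseRange.piMap fun _ => denseRange_algebraMap_pi K
  have hrange := hΦ.range_subset_closure_image_dense hdense
  rw [← Set.range_comp] at hrange
  rw [paperVinfty, ← SetLike.mem_coe, topologicalClosure_coe]
  refine closure_mono subset_span (hrange ⟨fun i => Pi.single v₀ (WithAbs.toAbs v₀.1 (y i)), ?_⟩)
  funext v i
  rcases eq_or_ne v v₀ with rfl | hv
  · simp [Φ, paperIota]
  · simp [Φ, hv]

noncomputable def traceFunctional (a : Fin s → K) : (InfinitePlace K → Fin s → ℂ) →ₗ[ℝ] ℝ :=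
  ∑ v, ∑ i, (mult v : ℝ) • (Complex.reLm ∘ₗ LinearMap.mulLeft ℝ (v.embedding (a i)) ∘ₗ
    LinearMap.proj i ∘ₗ LinearMap.proj v)

theorem traceFunctional_apply (a : Fin s → K) (x : InfinitePlace K → Fin s → ℂ) :
    traceFunctional K s a x = ∑ v, ∑ i, (mult v : ℝ) * (v.embedding (a i) * x v i).re := by
  simp [traceFunctional]

theorem traceFunctional_single [DecidableEq (InfinitePlace K)] (a : Fin s → K)
    (v : InfinitePlace K) (z : Fin s → ℂ) :
    traceFunctional K s a (Pi.single v z) = mult v * ∑ i, (v.embedding (a i) * z i).re := by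
  rw [traceFunctional_apply, Finset.sum_eq_single v, Pi.single_eq_same, Finset.mul_sum]
  · intro w _ hw
    simp [Pi.single_eq_of_ne hw]
  · simp

theorem traceFunctional_paperIota (a y : Fin s → K) :
    traceFunctional K s a (paperIota K s y) = ((∑ i, Algebra.trace ℚ K (a i * y i) : ℚ) : ℝ) := by
  simp only [traceFunctional_apply, paperIota, ← map_mul, ratCast_trace_eq_sum_mult_re,
    Rat.cast_sum]
  exact Finset.sum_comm

theorem not_le_span_paperIota_image {W : Submodule ℚ (Fin s → K)} (hW : W ≠ ⊤)
    {T : Set (InfinitePlace K)} (hT : T.Nonempty) :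
    ¬ paperVinfty K s ⊓ paperSupportedOn K s T ≤ span ℝ (paperIota K s '' W) := by
  classical
  intro hle
  obtain ⟨f, hf, hWf⟩ := W.exists_le_ker_of_lt_top hW.lt_top
  obtain ⟨a, ha⟩ := Algebra.exists_eq_sum_trace_mul f
  obtain ⟨i, hai⟩ : ∃ i, a i ≠ 0 := by
    by_contra! h
    exact hf (LinearMap.ext fun y => by simp [ha, h])
  have hker : span ℝ (paperIota K s '' W) ≤ LinearMap.ker (traceFunctional K s a) := by
    rw [span_le]
    rintro _ ⟨y, hy, rfl⟩
    simp [traceFunctional_paperIota, ← ha, LinearMap.mem_ker.mp (hWf hy)]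
  obtain ⟨v₀, hv₀⟩ := hT
  set x : InfinitePlace K → Fin s → ℂ := Pi.single v₀ (paperIota K s (Pi.single i (a i)⁻¹) v₀)
  have hx : x ∈ paperVinfty K s ⊓ paperSupportedOn K s T :=
    ⟨single_paperIota_mem_paperVinfty K s _ v₀,
      fun v hv => Pi.single_eq_of_ne (ne_of_mem_of_not_mem hv₀ hv).symm _⟩
  have hx0 : traceFunctional K s a x = 0 := hker (hle hx)
  have hx1 : traceFunctional K s a x = mult v₀ := by
    rw [traceFunctional_single, Finset.sum_eq_single i]
    · simp [paperIota, hai]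
    · intro j _ hj
      simp [paperIota, Pi.single_eq_of_ne hj]
    · simp
  exact mult_ne_zero (by exact_mod_cast hx1.symm.trans hx0)

end PaperIota

theorem paper_hyperplane_meets_every_component_general
    (K : Type*) [Field K] [NumberField K]
    (s : ℕ) (hs : 1 ≤ s)
    (W : Submodule ℚ (Fin s → K))
    (hW : Module.finrank ℚ W = s * Module.finrank ℚ K - 1)
    (T : Set (InfinitePlace K)) (hT : T.Nonempty) :
    Module.finrank ℝ
      ↥(Submodule.span ℝ (paperIota K s '' (W : Set (Fin s → K))) ⊓
          (paperVinfty K s ⊓ paperSupportedOn K s T)) =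
    Module.finrank ℝ ↥(paperVinfty K s ⊓ paperSupportedOn K s T) - 1 := by
  have hd : 0 < s * finrank ℚ K := Nat.mul_pos hs finrank_pos
  have hWtop : W ≠ ⊤ := by
    rintro rfl
    rw [finrank_top, finrank_fin_fun_eq_mul] at hW
    omega
  have hA : finrank ℝ (span ℝ (paperIota K s '' W)) = s * finrank ℚ K - 1 := by
    rw [finrank_span_paperIota_image, hW]
  have hAV : span ℝ (paperIota K s '' W) ≤ paperVinfty K s :=
    (span_mono (Set.image_subset_range _ _)).trans (le_topologicalClosure _)
  have hcodim := finrank_inf_add_one_of_not_le hAV inf_le_left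
    (by rw [finrank_paperVinfty, hA]; omega) (not_le_span_paperIota_image K s hWtop hT)
  omega

/-- Lemma `technical` (§5.2) of the paper: let `K = ℚ(ζ_m)`, `V = K^s`, and let
`W ⊆ V` be a `ℚ`-subspace of dimension `d - 1` where `d = s·[K:ℚ]`.  Then for
every nonempty set `T` of archimedean places of `K`, the intersection of the
hyperplane `W_∞` (the `ℝ`-span of the image of `W` in `V_∞`) with
`V_T = {x ∈ V_∞ : x_v = 0 for v ∉ T}` has real dimension `dim_ℝ V_T - 1`. -/
theorem paper_hyperplane_meets_every_component
    (m : ℕ) (hm : 0 < m) (K : Type*) [Field K] [NumberField K]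
    [IsCyclotomicExtension {m} ℚ K]
    (s : ℕ) (hs : 1 ≤ s)
    (W : Submodule ℚ (Fin s → K))
    (hW : Module.finrank ℚ W = s * Module.finrank ℚ K - 1)
    (T : Set (InfinitePlace K)) (hT : T.Nonempty) :
    Module.finrank ℝ
      ↥(Submodule.span ℝ (paperIota K s '' (W : Set (Fin s → K))) ⊓
          (paperVinfty K s ⊓ paperSupportedOn K s T)) =
    Module.finrank ℝ ↥(paperVinfty K s ⊓ paperSupportedOn K s T) - 1 :=
  paper_hyperplane_meets_every_component_general K s hs W hW T hT
end

section
/- Let p ≥ 1 be a natural number and let z ∈ ℂ satisfy z^p = 1. Let k and k′ be integers such that z^{k′} ≠ 1. Then the complex number ((z^k − 1)/(z^{k′} − 1))^p is real. -/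
/-!
On the unit circle `conj z = z⁻¹`, so `conj (z ^ k - 1) = z ^ (-k) - 1 = -z ^ (-k) * (z ^ k - 1)`.
Hence conjugation multiplies the quotient `w = (z ^ k - 1) / (z ^ k' - 1)` by `z ^ (k' - k)`,
and `w ^ p` by `(z ^ p) ^ (k' - k) = 1`: the number `w ^ p` is self-conjugate, i.e. real.
-/

open ComplexConjugate

namespace Complex

variable {z : ℂ}

theorem conj_zpow_sub_one_of_norm_eq_one (hz : ‖z‖ = 1) (k : ℤ) :
    conj (z ^ k - 1) = -z ^ (-k) * (z ^ k - 1) := by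
  have hz0 : z ≠ 0 := norm_ne_zero_iff.mp (hz ▸ one_ne_zero)
  rw [map_sub, map_one, map_zpow₀, ← inv_eq_conj hz, inv_zpow, ← zpow_neg, neg_mul, mul_sub,
    ← zpow_add₀ hz0, neg_add_cancel, zpow_zero, mul_one, neg_sub]

theorem conj_div_zpow_sub_one_of_norm_eq_one (hz : ‖z‖ = 1) (k k' : ℤ) :
    conj ((z ^ k - 1) / (z ^ k' - 1)) = z ^ (k' - k) * ((z ^ k - 1) / (z ^ k' - 1)) := by
  have hz0 : z ≠ 0 := norm_ne_zero_iff.mp (hz ▸ one_ne_zero)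
  rw [map_div₀, conj_zpow_sub_one_of_norm_eq_one hz, conj_zpow_sub_one_of_norm_eq_one hz,
    mul_div_mul_comm, neg_div_neg_eq, ← zpow_sub₀ hz0, neg_sub_neg]

end Complex

theorem paper_root_of_unity_quotient_power_real_general
    (p : ℕ) (hp : 1 ≤ p) (z : ℂ) (hz : z ^ p = 1) (k k' : ℤ) :
    (((z ^ k - 1) / (z ^ k' - 1)) ^ p).im = 0 := by
  have hnorm : ‖z‖ = 1 := Complex.norm_eq_one_of_pow_eq_one hz (by omega)
  have hfactor : (z ^ (k' - k)) ^ p = 1 := by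
    rw [← zpow_natCast, ← zpow_mul, mul_comm, zpow_mul, zpow_natCast, hz, one_zpow]
  rw [← Complex.conj_eq_iff_im, map_pow, Complex.conj_div_zpow_sub_one_of_norm_eq_one hnorm,
    mul_pow, hfactor, one_mul]

/-- The computation from the proof of Lemma `verytechnical` of the paper:
if `z^p = 1` and `z^{k'} ≠ 1`, then `((z^k - 1)/(z^{k'} - 1))^p` is a real
number. -/
theorem paper_root_of_unity_quotient_power_real
    (p : ℕ) (hp : 1 ≤ p) (z : ℂ) (hz : z ^ p = 1) (k k' : ℤ)
    (hk' : z ^ k' ≠ 1) :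
    (((z ^ k - 1) / (z ^ k' - 1)) ^ p).im = 0 :=
  paper_root_of_unity_quotient_power_real_general p hp z hz k k'
end

section
/- Let R be a commutative ring, let d ∈ R, let n ≥ 2, and let E be the subgroup of SL_n(R) generated by the elementary matrices I + c·d·E_{ij} for c ∈ R and i ≠ j (where E_{ij} is the matrix with 1 in position (i,j) and 0 elsewhere). Then every diagonal matrix D ∈ SL_n(R) all of whose diagonal entries satisfy D_{ii} − 1 ∈ d²R lies in E. -/
/-!
If `a = 1 + s d²` and `a b = 1`, then on two coordinates
`diag(a, b) = [[1, -ad], [0, 1]] · [[1, 0], [-bsd, 1]] · [[1, d], [0, 1]] · [[1, 0], [sd, 1]]`,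
a product of `d`-elementary matrices. Fixing a pivot index `p`, these pair matrices move the
diagonal entries of `D` to the pivot one at a time; since `det D = 1`, the entry left at the pivot
is `1`.
-/

open Matrix

section

variable {ι R : Type*} [Fintype ι] [DecidableEq ι] [CommRing R]

def dElementary (d : R) : Subgroup (Matrix.SpecialLinearGroup ι R) :=
  Subgroup.closure {A | ∃ (c : R) (i j : ι), i ≠ j ∧ (A : Matrix ι ι R) = 1 + single i j (c * d)}

lemma transvection_mem_dElementary (d c : R) {i j : ι} (hij : i ≠ j) :
    Matrix.SpecialLinearGroup.transvection hij (c * d) ∈ dElementary d :=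
  Subgroup.subset_closure ⟨c, i, j, hij, rfl⟩

def pairDiag (p q : ι) (a b : R) : ι → R := fun i => if i = p then a else if i = q then b else 1

lemma diagonal_pairDiag_eq_prod_transvection {p q : ι} (hpq : p ≠ q) {d a b s : R}
    (hab : a * b = 1) (hs : a - 1 = s * d ^ 2) :
    diagonal (pairDiag p q a b) = (1 + single p q (-a * d)) * (1 + single q p (-(b * s) * d)) *
      (1 + single p q (1 * d)) * (1 + single q p (s * d)) := by
  simp only [mul_add, add_mul, one_mul, mul_one, single_mul_single_same,
    single_mul_single_of_ne _ _ _ _ hpq, single_mul_single_of_ne _ _ _ _ hpq.symm, add_zero]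
  ext i j
  simp only [Matrix.add_apply, single_apply, one_apply, diagonal_apply, pairDiag]
  grind

lemma exists_mem_dElementary_coe_eq_diagonal_pairDiag {p q : ι} (hpq : p ≠ q) {d a b : R}
    (hab : a * b = 1) (ha : Ideal.Quotient.mk (Ideal.span {d ^ 2}) a = 1) :
    ∃ W ∈ dElementary (ι := ι) d, (W : Matrix ι ι R) = diagonal (pairDiag p q a b) := by
  obtain ⟨s, hs⟩ :=
    Ideal.mem_span_singleton'.mp (Ideal.Quotient.eq.mp (ha.trans (map_one _).symm))
  open Matrix.SpecialLinearGroup in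
  refine ⟨transvection hpq (-a * d) * transvection hpq.symm (-(b * s) * d) *
      transvection hpq (1 * d) * transvection hpq.symm (s * d), ?_, ?_⟩
  · refine mul_mem (mul_mem (mul_mem ?_ ?_) ?_) ?_ <;> exact transvection_mem_dElementary _ _ _
  · exact (diagonal_pairDiag_eq_prod_transvection hpq hab hs.symm).symm

lemma mem_dElementary_of_coe_eq_diagonal_of_forall_notMem_eq_one (d : R) (p : ι)
    (s : Finset ι) (v : ι → R) (D : Matrix.SpecialLinearGroup ι R)
    (hD : (D : Matrix ι ι R) = diagonal v)
    (hv : ∀ i, Ideal.Quotient.mk (Ideal.span {d ^ 2}) (v i) = 1)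
    (hs : ∀ i ∉ insert p s, v i = 1) : D ∈ dElementary d := by
  induction s using Finset.induction_on generalizing v D with
  | empty =>
    have hdet : ∏ i, v i = v p :=
      Finset.prod_eq_single p (fun i _ hi => hs i (by simp [hi])) (by simp)
    have hvp : v p = 1 := by rw [← hdet, ← det_diagonal, ← hD, D.det_coe]
    have hv1 : v = 1 := funext fun i => by
      by_cases hi : i = p
      · rw [hi, hvp]; rfl
      · exact hs i (by simp [hi])
    have hD1 : D = 1 := by
      ext i j
      simp [hD, hv1]
    rw [hD1]
    exact one_mem _
  | insert k s hk IH =>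
    by_cases hkp : k = p
    · subst hkp
      exact IH v D hD hv fun i hi => hs i (by rwa [Finset.insert_idem])
    set a := v k
    set b := ∏ i ∈ Finset.univ.erase k, v i
    have hab : a * b = 1 := by
      rw [Finset.mul_prod_erase _ _ (Finset.mem_univ k), ← det_diagonal, ← hD, D.det_coe]
    have ha : Ideal.Quotient.mk (Ideal.span {d ^ 2}) a = 1 := hv k
    have hb : Ideal.Quotient.mk (Ideal.span {d ^ 2}) b = 1 := by
      have := congrArg (Ideal.Quotient.mk (Ideal.span {d ^ 2})) hab
      rwa [map_mul, ha, one_mul, map_one] at this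
    -- `W` moves the entry `a` from `k` to the pivot `p`.
    obtain ⟨W, hW, hWcoe⟩ :=
      exists_mem_dElementary_coe_eq_diagonal_pairDiag hkp (mul_comm a b ▸ hab) hb
    have hDW : D * W ∈ dElementary d := by
      refine IH (v * pairDiag k p b a) (D * W) ?_ (fun i => ?_) (fun i hi => ?_)
      · simp only [Matrix.SpecialLinearGroup.coe_mul, hD, hWcoe, diagonal_mul_diagonal]
        rfl
      · simp only [Pi.mul_apply, map_mul, hv, one_mul, pairDiag]
        split_ifs <;> simp [ha, hb]
      · by_cases hik : i = k
        · simp [hik, pairDiag, hab, a]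
        · have hip : i ≠ p := fun h => hi (h ▸ Finset.mem_insert_self p s)
          simp [pairDiag, hik, hip, hs i (by simp_all)]
    simpa using mul_mem hDW (inv_mem hW)

theorem mem_dElementary_of_coe_eq_diagonal {d : R} {D : Matrix.SpecialLinearGroup ι R}
    {v : ι → R} (hD : (D : Matrix ι ι R) = diagonal v)
    (hv : ∀ i, Ideal.Quotient.mk (Ideal.span {d ^ 2}) (v i) = 1) : D ∈ dElementary d := by
  cases isEmpty_or_nonempty ι with
  | inl _ =>
    rw [Subsingleton.elim D 1]
    exact one_mem _
  | inr hι =>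
    obtain ⟨p⟩ := hι
    exact mem_dElementary_of_coe_eq_diagonal_of_forall_notMem_eq_one d p Finset.univ v D hD hv
      (by simp)

end

theorem paper_diagonal_reduction_by_d_operations_general
    (R : Type*) [CommRing R] (d : R) (n : ℕ)
    (D : Matrix.SpecialLinearGroup (Fin n) R)
    (hdiag : ∀ i j : Fin n, i ≠ j → (D : Matrix (Fin n) (Fin n) R) i j = 0)
    (hcong : ∀ i : Fin n, ∃ s : R, (D : Matrix (Fin n) (Fin n) R) i i - 1 = d ^ 2 * s) :
    D ∈ Subgroup.closure
      {A : Matrix.SpecialLinearGroup (Fin n) R |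
        ∃ (c : R) (i j : Fin n), i ≠ j ∧
          (A : Matrix (Fin n) (Fin n) R) = 1 + Matrix.single i j (c * d)} := by
  refine mem_dElementary_of_coe_eq_diagonal (v := fun i => D i i) ?_ fun i => ?_
  · ext i j
    rcases eq_or_ne i j with rfl | hij
    · simp
    · simp [hdiag i j hij, hij]
  · obtain ⟨s, hs⟩ := hcong i
    rw [← map_one (Ideal.Quotient.mk _), Ideal.Quotient.eq, hs]
    exact Ideal.mul_mem_right _ _ (Ideal.mem_span_singleton_self _)

/-- The "d-operations" reduction of §7.1 of the paper: over a commutative ring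
`R`, any diagonal matrix in `SL_n(R)` whose diagonal entries are congruent to
`1` modulo `d²R` lies in the subgroup generated by the elementary matrices
`I + c·d·E_{ij}` (`c ∈ R`, `i ≠ j`). -/
theorem paper_diagonal_reduction_by_d_operations
    (R : Type*) [CommRing R] (d : R) (n : ℕ) (hn : 2 ≤ n)
    (D : Matrix.SpecialLinearGroup (Fin n) R)
    (hdiag : ∀ i j : Fin n, i ≠ j → (D : Matrix (Fin n) (Fin n) R) i j = 0)
    (hcong : ∀ i : Fin n, ∃ s : R, (D : Matrix (Fin n) (Fin n) R) i i - 1 = d ^ 2 * s) :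
    D ∈ Subgroup.closure
      {A : Matrix.SpecialLinearGroup (Fin n) R |
        ∃ (c : R) (i j : Fin n), i ≠ j ∧
          (A : Matrix (Fin n) (Fin n) R) = 1 + Matrix.single i j (c * d)} :=
  paper_diagonal_reduction_by_d_operations_general R d n D hdiag hcong
end

section
/- Let k be a number field with ring of integers 𝒪, let m ≥ 2 be an integer, and let R be the subring of k consisting of all elements that are v-integral for every finite place v of k dividing m. Let n ≥ 2, let H be a normal subgroup of SL_n(R) of finite index, and let d be a positive integer such that the index of H divides d and m divides d. Then every matrix A ∈ SL_n(R) that is congruent to the identity modulo d²R (i.e. every entry of A − I lies in d²R) belongs to H. -/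
/-!
Put `I = d²R`. For every place `v ∣ m` we have `v(d) < 1`, so `1 + I` consists of units: `I` lies
in the Jacobson radical of `R`. For such an ideal the principal congruence subgroup `Γ(I)` of
`SL_n(R)` is the normal closure of the transvections `e_ij(x)`, `x ∈ I`: clearing row and column
`r` of `A ∈ Γ(I)` around the unit pivot `A r r` uses only such transvections, once the pivot is
turned into `1` by `diag(u, u⁻¹)`, and Whitehead's identity writes that diagonal matrix with
`u ≡ 1 mod I` as a product of `I`-transvections and a conjugate of one. Finally every
`e_ij(d²s) = e_ij(ds)^d` lies in `H`, since the index of `H` divides `d`.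
-/

/-- The ring `R` of the paper (§7.1): the subring of a number field `k`
consisting of the elements that are `v`-integral at every finite place `v`
dividing `m`. -/
noncomputable def paperSRing (k : Type*) [Field k] [NumberField k] (m : ℕ) : Subring k :=
  ⨅ v ∈ {v : IsDedekindDomain.HeightOneSpectrum (NumberField.RingOfIntegers k) |
      (m : NumberField.RingOfIntegers k) ∈ v.asIdeal},
    (IsDedekindDomain.HeightOneSpectrum.valuation (K := k) v).integer

open Matrix

theorem Function.update_add_zero {ι M : Type*} [DecidableEq ι] [AddZeroClass M] (a b : ι → M)
    (i : ι) : Function.update (a + b) i 0 = Function.update a i 0 + Function.update b i 0 := by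
  rw [← Function.update_add, add_zero]

theorem Subgroup.apply_mem_of_forall_single_mem {ι R G : Type*} [Fintype ι] [DecidableEq ι]
    [CommRing R] [Group G] {K : Subgroup G} {I : Ideal R} (F : (ι → R) → G)
    (hF : ∀ a b, F (a + b) = F a * F b) (hsingle : ∀ i, ∀ x ∈ I, F (Pi.single i x) ∈ K)
    {c : ι → R} (hc : ∀ i, c i ∈ I) : F c ∈ K := by
  have hF0 : F 0 = 1 := by simpa using hF 0 0
  rw [← Finset.univ_sum_single c]
  exact Finset.sum_induction _ (fun c => F c ∈ K) (fun a b ha hb => hF a b ▸ K.mul_mem ha hb)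
    (hF0 ▸ K.one_mem) fun i _ => hsingle i _ (hc i)

theorem Subgroup.pow_mem_of_index_dvd {G : Type*} [Group G] (H : Subgroup G) [H.Normal] (g : G)
    {N : ℕ} (hN : H.index ∣ N) : g ^ N ∈ H := by
  obtain ⟨e, rfl⟩ := hN
  rw [pow_mul]
  exact pow_mem (H.pow_index_mem g) e

namespace Matrix

variable {n R : Type*} [DecidableEq n] [CommRing R]

def EqOneOutside (t : Finset n) (M : Matrix n n R) : Prop :=
  ∀ i j, i ∉ t ∨ j ∉ t → M i j = (1 : Matrix n n R) i j

theorem EqOneOutside.eq_one {M : Matrix n n R} (hM : EqOneOutside ∅ M) : M = 1 :=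
  ext fun i j => hM i j (Or.inl (Finset.notMem_empty i))

theorem EqOneOutside.diagonal_mul [Fintype n] {t : Finset n} {M : Matrix n n R}
    (hM : EqOneOutside t M) {d : n → R} (hd : ∀ i ∉ t, d i = 1) :
    EqOneOutside t (diagonal d * M) := by
  intro i j hij
  rw [Matrix.diagonal_mul]
  by_cases hi : i ∈ t
  · have hj : j ∉ t := hij.resolve_left (not_not_intro hi)
    rw [hM i j hij, one_apply_ne (ne_of_mem_of_not_mem hi hj), mul_zero]
  · rw [hd i hi, one_mul, hM i j hij]

end Matrix

namespace Matrix.SpecialLinearGroup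

variable {n R : Type*} [Fintype n] [DecidableEq n] [CommRing R]

variable (n) in
def principalCongruenceSubgroup (I : Ideal R) :
    Subgroup (SpecialLinearGroup n R) :=
  (map (Ideal.Quotient.mk I)).ker

variable (n) in
def relativeElementarySubgroup (I : Ideal R) :
    Subgroup (SpecialLinearGroup n R) :=
  Subgroup.normalClosure
    {g | ∃ (i j : n) (hij : i ≠ j) (x : R), x ∈ I ∧ transvection hij x = g}

-- The `r`-th entry of `c` is ignored (also in `rowTransvection`), which makes both additive in `c`.
def colTransvection (r : n) (c : n → R) : SpecialLinearGroup n R :=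
  ⟨1 + vecMulVec (Function.update c r 0) (Pi.single r 1), by
    rw [vecMulVec_eq Unit, det_one_add_replicateCol_mul_replicateRow, single_dotProduct]
    simp⟩

def rowTransvection (r : n) (c : n → R) : SpecialLinearGroup n R :=
  ⟨1 + vecMulVec (Pi.single r 1) (Function.update c r 0), by
    rw [vecMulVec_eq Unit, det_one_add_replicateCol_mul_replicateRow, dotProduct_single]
    simp⟩

def diagonalUnitInv (i j : n) (u : Rˣ) : SpecialLinearGroup n R :=
  ⟨diagonal (Pi.mulSingle i (u : R) * Pi.mulSingle j (↑u⁻¹ : R)), by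
    simp [det_diagonal, Finset.prod_mul_distrib, Finset.prod_pi_mulSingle']⟩

theorem coe_colTransvection (r : n) (c : n → R) :
    (colTransvection r c : Matrix n n R) = 1 + vecMulVec (Function.update c r 0) (Pi.single r 1) :=
  rfl

theorem coe_rowTransvection (r : n) (c : n → R) :
    (rowTransvection r c : Matrix n n R) = 1 + vecMulVec (Pi.single r 1) (Function.update c r 0) :=
  rfl

theorem coe_diagonalUnitInv (i j : n) (u : Rˣ) :
    (diagonalUnitInv i j u : Matrix n n R)
      = diagonal (Pi.mulSingle i (u : R) * Pi.mulSingle j (↑u⁻¹ : R)) :=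
  rfl

instance (I : Ideal R) : (principalCongruenceSubgroup n I).Normal :=
  MonoidHom.normal_ker _

instance (I : Ideal R) : (relativeElementarySubgroup n I).Normal :=
  Subgroup.normalClosure_normal

theorem mem_principalCongruenceSubgroup {I : Ideal R} {A : SpecialLinearGroup n R} :
    A ∈ principalCongruenceSubgroup n I ↔ ∀ i j, A i j - (1 : Matrix n n R) i j ∈ I := by
  simp only [principalCongruenceSubgroup, MonoidHom.mem_ker, SpecialLinearGroup.ext_iff,
    map_apply_coe, RingHom.mapMatrix_apply, map_apply, coe_one]
  refine forall₂_congr fun i j => ?_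
  rw [← Ideal.Quotient.eq]
  by_cases h : i = j <;> simp [h, one_apply]

theorem transvection_mem_relativeElementarySubgroup {I : Ideal R} {i j : n} (hij : i ≠ j)
    {x : R} (hx : x ∈ I) : transvection hij x ∈ relativeElementarySubgroup n I :=
  Subgroup.subset_normalClosure ⟨i, j, hij, x, hx, rfl⟩

theorem relativeElementarySubgroup_le_principalCongruenceSubgroup (I : Ideal R) :
    relativeElementarySubgroup n I ≤ principalCongruenceSubgroup n I := by
  refine Subgroup.normalClosure_le_normal ?_
  rintro _ ⟨i, j, hij, x, hx, rfl⟩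
  refine mem_principalCongruenceSubgroup.2 fun a b => ?_
  simp only [transvection_coe, add_apply, add_sub_cancel_left, single_apply]
  split_ifs
  exacts [hx, I.zero_mem]

theorem transvection_pow {i j : n} (hij : i ≠ j) (x : R) (N : ℕ) :
    transvection hij x ^ N = transvection hij (N * x) := by
  induction N with
  | zero => simp
  | succ N ih => rw [pow_succ, ih, ← transvection_add]; push_cast; ring_nf

theorem colTransvection_add (r : n) (a b : n → R) :
    colTransvection r (a + b) = colTransvection r a * colTransvection r b := by
  refine Subtype.ext ?_
  simp [coe_colTransvection, add_mul, mul_add, vecMulVec_mul_vecMulVec, Function.update_add_zero,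
    add_vecMulVec, add_assoc]

theorem rowTransvection_add (r : n) (a b : n → R) :
    rowTransvection r (a + b) = rowTransvection r a * rowTransvection r b := by
  refine Subtype.ext ?_
  simp [coe_rowTransvection, add_mul, mul_add, vecMulVec_mul_vecMulVec, Function.update_add_zero,
    vecMulVec_add, add_assoc]

theorem colTransvection_single {r i : n} (hir : i ≠ r) (x : R) :
    colTransvection r (Pi.single i x) = transvection hir x := by
  refine Subtype.ext (Matrix.ext fun a b => ?_)
  simp [coe_colTransvection, transvection_coe, vecMulVec_apply, Pi.single_apply,
    Function.update_apply, single_apply]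
  grind

theorem rowTransvection_single {r j : n} (hrj : r ≠ j) (x : R) :
    rowTransvection r (Pi.single j x) = transvection hrj x := by
  refine Subtype.ext (Matrix.ext fun a b => ?_)
  simp [coe_rowTransvection, transvection_coe, vecMulVec_apply, Pi.single_apply,
    Function.update_apply, single_apply]
  grind

theorem colTransvection_single_self (r : n) (x : R) : colTransvection r (Pi.single r x) = 1 :=
  Subtype.ext (by simp [coe_colTransvection, Pi.single, Function.update_idem])

theorem rowTransvection_single_self (r : n) (x : R) : rowTransvection r (Pi.single r x) = 1 :=
  Subtype.ext (by simp [coe_rowTransvection, Pi.single, Function.update_idem])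

theorem colTransvection_mem_relativeElementarySubgroup {I : Ideal R} (r : n) {c : n → R}
    (hc : ∀ i ≠ r, c i ∈ I) : colTransvection r c ∈ relativeElementarySubgroup n I := by
  have hupd : colTransvection r c = colTransvection r (Function.update c r 0) :=
    Subtype.ext (by simp only [coe_colTransvection, Function.update_idem])
  rw [hupd]
  refine Subgroup.apply_mem_of_forall_single_mem (I := I) _ (colTransvection_add r)
    (fun i x hx => ?_) fun i => ?_
  · rcases eq_or_ne i r with rfl | hi
    · rw [colTransvection_single_self]
      exact one_mem _
    · rw [colTransvection_single hi]
      exact transvection_mem_relativeElementarySubgroup hi hx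
  · rcases eq_or_ne i r with rfl | hi
    · simp
    · simpa [hi] using hc i hi

theorem rowTransvection_mem_relativeElementarySubgroup {I : Ideal R} (r : n) {c : n → R}
    (hc : ∀ j ≠ r, c j ∈ I) : rowTransvection r c ∈ relativeElementarySubgroup n I := by
  have hupd : rowTransvection r c = rowTransvection r (Function.update c r 0) :=
    Subtype.ext (by simp only [coe_rowTransvection, Function.update_idem])
  rw [hupd]
  refine Subgroup.apply_mem_of_forall_single_mem (I := I) _ (rowTransvection_add r)
    (fun j x hx => ?_) fun j => ?_
  · rcases eq_or_ne j r with rfl | hj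
    · rw [rowTransvection_single_self]
      exact one_mem _
    · rw [rowTransvection_single hj.symm]
      exact transvection_mem_relativeElementarySubgroup hj.symm hx
  · rcases eq_or_ne j r with rfl | hj
    · simp
    · simpa [hj] using hc j hj

theorem diagonalUnitInv_eq_prod_transvection {i j : n} (hij : i ≠ j) (u : Rˣ) :
    diagonalUnitInv i j u = transvection hij.symm ((↑u⁻¹ : R) - 1)
      * (transvection hij (1 : R) * transvection hij.symm ((u : R) - 1) * (transvection hij 1)⁻¹)
      * transvection hij (1 - (↑u⁻¹ : R)) := by
  have hu : (u : R) * ↑u⁻¹ = 1 := u.mul_inv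
  refine Subtype.ext ?_
  simp only [transvection_inv, coe_mul, transvection_coe, coe_diagonalUnitInv, add_mul, mul_add,
    one_mul, mul_one, single_mul_single_same, single_mul_single_of_ne _ _ _ _ hij,
    single_mul_single_of_ne _ _ _ _ hij.symm, add_zero]
  ext a b
  simp only [add_apply, one_apply, single_apply, diagonal_apply, Pi.mul_apply, Pi.mulSingle_apply]
  grind

theorem diagonalUnitInv_mem_relativeElementarySubgroup {I : Ideal R} {i j : n} (hij : i ≠ j)
    {u : Rˣ} (hu : (u : R) - 1 ∈ I) :
    diagonalUnitInv i j u ∈ relativeElementarySubgroup n I := by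
  have hu' : (↑u⁻¹ : R) - 1 ∈ I := by
    convert I.mul_mem_left (-(↑u⁻¹ : R)) hu using 1
    linear_combination u.inv_mul
  rw [diagonalUnitInv_eq_prod_transvection hij]
  refine mul_mem (mul_mem (transvection_mem_relativeElementarySubgroup hij.symm hu') ?_)
    (transvection_mem_relativeElementarySubgroup hij (by simpa using I.neg_mem hu'))
  exact Subgroup.Normal.conj_mem inferInstance _
    (transvection_mem_relativeElementarySubgroup hij.symm hu) _

theorem eq_one_of_eqOneOutside_singleton {r : n} {A : SpecialLinearGroup n R}
    (hA : EqOneOutside {r} (A : Matrix n n R)) : A = 1 := by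
  have hdiag : (A : Matrix n n R) = diagonal fun i => A i i := by
    ext i j
    by_cases hij : i = j
    · simp [hij]
    · have : i ∉ ({r} : Finset n) ∨ j ∉ ({r} : Finset n) := by
        by_contra! h
        simp_all
      rw [hA i j this, one_apply_ne hij, diagonal_apply_ne _ hij]
  have hrr : A r r = 1 := by
    have hdet := A.det_coe
    rwa [hdiag, det_diagonal, Finset.prod_eq_single r (fun i _ hi => by
      simpa using hA i i (Or.inl (by simpa using hi))) (by simp)] at hdet
  refine SpecialLinearGroup.ext _ _ fun i j => ?_
  by_cases h : i = r ∧ j = r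
  · obtain ⟨rfl, rfl⟩ := h
    simpa using hrr
  · exact hA i j (by simpa using not_and_or.1 h)

theorem colTransvection_mul_mul_rowTransvection_apply {A : SpecialLinearGroup n R} {r : n}
    (hA : A r r = 1) (i j : n) :
    (colTransvection r (fun i => -A i r) * A * rowTransvection r (fun j => -A r j)) i j
      = if i = r ∨ j = r then (1 : Matrix n n R) i j else A i j - A i r * A r j := by
  simp only [coe_mul, coe_colTransvection, coe_rowTransvection, add_mul, mul_add, one_mul, mul_one,
    vecMulVec_mul, mul_vecMulVec, single_one_vecMul, mulVec_single_one, add_apply, vecMulVec_apply,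
    Function.update_apply, one_apply, row_apply, col_apply]
  grind

theorem apply_mem_of_mem_principalCongruenceSubgroup {I : Ideal R} {A : SpecialLinearGroup n R}
    (hA : A ∈ principalCongruenceSubgroup n I) {i j : n} (hij : i ≠ j) : A i j ∈ I := by
  simpa [one_apply_ne hij] using mem_principalCongruenceSubgroup.1 hA i j

theorem eqOneOutside_colTransvection_mul_mul_rowTransvection {A : SpecialLinearGroup n R} {r : n}
    {t : Finset n} (hArr : A r r = 1) (hA : EqOneOutside (insert r t) (A : Matrix n n R)) :
    EqOneOutside t
      ((colTransvection r (fun i => -A i r) * A * rowTransvection r (fun j => -A r j) :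
        SpecialLinearGroup n R) : Matrix n n R) := by
  intro i j hij
  rw [colTransvection_mul_mul_rowTransvection_apply hArr]
  split_ifs with hr
  · rfl
  · obtain ⟨hir, hjr⟩ := not_or.1 hr
    have hij' : i ∉ insert r t ∨ j ∉ insert r t := by simpa [hir, hjr] using hij
    rw [hA i j hij']
    rcases hij' with hi | hj
    · rw [hA i r (Or.inl hi), one_apply_ne hir, zero_mul, sub_zero]
    · rw [hA r j (Or.inr hj), one_apply_ne (Ne.symm hjr), mul_zero, sub_zero]

theorem exists_mem_relativeElementarySubgroup_mul_apply_eq_one {I : Ideal R}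
    (hI : I ≤ Ideal.jacobson ⊥) {A : SpecialLinearGroup n R}
    (hA : A ∈ principalCongruenceSubgroup n I) {t : Finset n}
    (hAt : EqOneOutside t (A : Matrix n n R)) {r s : n} (hrs : r ≠ s) (hr : r ∈ t)
    (hs : s ∈ t) :
    ∃ g ∈ relativeElementarySubgroup n I,
      (g * A) r r = 1 ∧ EqOneOutside t ((g * A : SpecialLinearGroup n R) : Matrix n n R) := by
  have hArr : A r r - 1 ∈ I := by simpa using mem_principalCongruenceSubgroup.1 hA r r
  set u := (Ideal.isUnit_of_sub_one_mem_jacobson_bot _ (hI hArr)).unit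
  refine ⟨diagonalUnitInv s r u, diagonalUnitInv_mem_relativeElementarySubgroup hrs.symm hArr,
    ?_, ?_⟩
  · simp [coe_diagonalUnitInv, hrs, u]
  · refine hAt.diagonal_mul fun i hi => ?_
    simp [(ne_of_mem_of_not_mem hr hi).symm, (ne_of_mem_of_not_mem hs hi).symm]

theorem mem_relativeElementarySubgroup_of_eqOneOutside {I : Ideal R} (hI : I ≤ Ideal.jacobson ⊥)
    (t : Finset n) {A : SpecialLinearGroup n R} (hA : A ∈ principalCongruenceSubgroup n I)
    (hAt : EqOneOutside t (A : Matrix n n R)) : A ∈ relativeElementarySubgroup n I := by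
  induction t using Finset.induction_on generalizing A with
  | empty => exact (Subtype.ext hAt.eq_one : A = 1) ▸ one_mem _
  | insert r t hrt ih =>
    rcases t.eq_empty_or_nonempty with rfl | ⟨s, hs⟩
    -- With no second index there is no `diag(u, u⁻¹)`, but then `det A = 1` already forces `A = 1`.
    · exact eq_one_of_eqOneOutside_singleton hAt ▸ one_mem _
    obtain ⟨g, hg, hgArr, hgAt⟩ :=
      exists_mem_relativeElementarySubgroup_mul_apply_eq_one hI hA hAt
        (ne_of_mem_of_not_mem hs hrt).symm (t.mem_insert_self r) (Finset.mem_insert_of_mem hs)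
    have hgA := mul_mem (relativeElementarySubgroup_le_principalCongruenceSubgroup I hg) hA
    have hL := colTransvection_mem_relativeElementarySubgroup r
      fun i hi => I.neg_mem (apply_mem_of_mem_principalCongruenceSubgroup hgA hi)
    have hR := rowTransvection_mem_relativeElementarySubgroup r
      fun j hj => I.neg_mem (apply_mem_of_mem_principalCongruenceSubgroup hgA hj.symm)
    have := ih (mul_mem (mul_mem (relativeElementarySubgroup_le_principalCongruenceSubgroup I hL)
      hgA) (relativeElementarySubgroup_le_principalCongruenceSubgroup I hR))
      (eqOneOutside_colTransvection_mul_mul_rowTransvection hgArr hgAt)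
    rwa [mul_mem_cancel_right hR, mul_mem_cancel_left hL, mul_mem_cancel_left hg] at this

theorem principalCongruenceSubgroup_eq_relativeElementarySubgroup {I : Ideal R}
    (hI : I ≤ Ideal.jacobson ⊥) :
    principalCongruenceSubgroup n I = relativeElementarySubgroup n I :=
  le_antisymm (fun _ hA => mem_relativeElementarySubgroup_of_eqOneOutside hI Finset.univ hA
    fun _ _ h => by simp at h) (relativeElementarySubgroup_le_principalCongruenceSubgroup I)

end Matrix.SpecialLinearGroup

theorem Valuation.mem_jacobson_bot_iInf_integer {K ι Γ₀ : Type*} [Field K]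
    [LinearOrderedCommGroupWithZero Γ₀] {v : ι → Valuation K Γ₀} {S : Set ι}
    (hS : S.Nonempty)
    {x : ↥(⨅ i ∈ S, (v i).integer : Subring K)} (hx : ∀ i ∈ S, v i x < 1) :
    x ∈ Ideal.jacobson ⊥ := by
  have hmem : ∀ z : K, z ∈ (⨅ i ∈ S, (v i).integer) ↔ ∀ i ∈ S, v i z ≤ 1 := by
    simp [Subring.mem_iInf, Valuation.mem_integer_iff]
  refine Ideal.mem_jacobson_bot.2 fun y => ?_
  set z : K := ↑(x * y + 1)
  have hval : ∀ i ∈ S, v i z = 1 := fun i hi => by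
    rw [show z = 1 + x * y by push_cast [z]; ring]
    refine Valuation.map_one_add_of_lt _ ?_
    rw [map_mul]
    exact mul_lt_one_of_lt_of_le (hx i hi) ((hmem _).1 y.2 i hi)
  obtain ⟨i₀, hi₀⟩ := hS
  have hz : z ≠ 0 := fun h => by simpa [h] using hval i₀ hi₀
  refine isUnit_iff_exists_inv.2
    ⟨⟨z⁻¹, (hmem _).2 fun i hi => ?_⟩, Subtype.ext (mul_inv_cancel₀ hz)⟩
  rw [map_inv₀, hval i hi, inv_one]

open IsDedekindDomain NumberField in
theorem NumberField.exists_natCast_mem_heightOneSpectrum (k : Type*) [Field k] [NumberField k]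
    {m : ℕ} (hm : 2 ≤ m) : ∃ v : HeightOneSpectrum (𝓞 k), (m : 𝓞 k) ∈ v.asIdeal := by
  have hspan : Ideal.span {(m : 𝓞 k)} ≠ ⊤ := by
    have := Ideal.map_eq_top_iff (algebraMap ℤ (𝓞 k)) (I := Ideal.span {(m : ℤ)})
      (FaithfulSMul.algebraMap_injective ℤ (𝓞 k)) fun x => Algebra.IsIntegral.isIntegral x
    rw [Ideal.map_span, Set.image_singleton, map_natCast] at this
    rw [Ne, this, Ideal.span_singleton_eq_top, Int.isUnit_iff]
    omega
  obtain ⟨M, hM, hle⟩ := Ideal.exists_le_maximal _ hspan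
  exact ⟨⟨M, hM.isPrime,
    Ring.ne_bot_of_isMaximal_of_not_isField hM (RingOfIntegers.not_isField k)⟩,
    hle (Ideal.mem_span_singleton_self _)⟩

theorem natCast_mem_jacobson_paperSRing (k : Type*) [Field k] [NumberField k] {m : ℕ}
    (hm : 2 ≤ m) : (m : paperSRing k m) ∈ Ideal.jacobson ⊥ :=
  Valuation.mem_jacobson_bot_iInf_integer (NumberField.exists_natCast_mem_heightOneSpectrum k hm)
    fun v hv => by
      simpa using (IsDedekindDomain.HeightOneSpectrum.valuation_lt_one_iff_mem (K := k) v _).2 hv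

open Matrix.SpecialLinearGroup in
theorem paper_congruence_modulo_d_squared_general
    (k : Type*) [Field k] [NumberField k] (m : ℕ) (hm : 2 ≤ m) (n : ℕ)
    (H : Subgroup (Matrix.SpecialLinearGroup (Fin n) (paperSRing k m)))
    (hnorm : H.Normal)
    (d : ℕ) (hindex : H.index ∣ d) (hmd : m ∣ d)
    (A : Matrix.SpecialLinearGroup (Fin n) (paperSRing k m))
    (hA : ∀ i j : Fin n, ∃ s : paperSRing k m,
      ((A : Matrix (Fin n) (Fin n) (paperSRing k m)) - 1) i j
        = (d : paperSRing k m) ^ 2 * s) :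
    A ∈ H := by
  set I := Ideal.span {(d : paperSRing k m) ^ 2}
  have hI : I ≤ Ideal.jacobson ⊥ :=
    (Ideal.span_singleton_le_iff_mem _).2 <| Ideal.mem_of_dvd _
      ((Nat.cast_dvd_cast hmd).trans (dvd_pow_self _ two_ne_zero))
      (natCast_mem_jacobson_paperSRing k hm)
  have hEH : relativeElementarySubgroup (Fin n) I ≤ H := by
    refine Subgroup.normalClosure_le_normal ?_
    rintro _ ⟨i, j, hij, x, hx, rfl⟩
    obtain ⟨s, rfl⟩ := Ideal.mem_span_singleton.1 hx
    have : transvection hij ((d : paperSRing k m) ^ 2 * s) = transvection hij (d * s) ^ d := by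
      rw [transvection_pow, sq, mul_assoc]
    exact this ▸ H.pow_mem_of_index_dvd _ hindex
  rw [← principalCongruenceSubgroup_eq_relativeElementarySubgroup hI] at hEH
  exact hEH (mem_principalCongruenceSubgroup.2 fun i j => Ideal.mem_span_singleton.2 (hA i j))

/-- Main step of Lemma `congruence` (§7.1) of the paper: if `H` is a normal
subgroup of `SL_n(R)` of finite index, and `d` is a positive integer divisible
both by `m` and by the index of `H`, then every matrix congruent to the
identity modulo `d²R` belongs to `H`. -/
theorem paper_congruence_modulo_d_squared
    (k : Type*) [Field k] [NumberField k] (m : ℕ) (hm : 2 ≤ m) (n : ℕ) (hn : 2 ≤ n)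
    (H : Subgroup (Matrix.SpecialLinearGroup (Fin n) (paperSRing k m)))
    (hnorm : H.Normal) (hfin : H.FiniteIndex)
    (d : ℕ) (hd : 0 < d) (hindex : H.index ∣ d) (hmd : m ∣ d)
    (A : Matrix.SpecialLinearGroup (Fin n) (paperSRing k m))
    (hA : ∀ i j : Fin n, ∃ s : paperSRing k m,
      ((A : Matrix (Fin n) (Fin n) (paperSRing k m)) - 1) i j
        = (d : paperSRing k m) ^ 2 * s) :
    A ∈ H :=
  paper_congruence_modulo_d_squared_general k m hm n H hnorm d hindex hmd A hA
end
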